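/- Fix integers n ≥ 0 and y₀ ≥ 0, and set d = n + y₀ + 2. Then the infinite-corridor number satisfies c^{(∞)}_{n,y₀} = σ_{n, ⌊(n+y₀)/2⌋}, where σ is the circular Pascal array of order d with initial offset y₀. -/
import Mathlib

/-- Binomial coefficient `C(n,x)` with integer lower argument, zero when `x < 0` or `x > n`. -/
noncomputable def binomZ (n : ℕ) (x : ℤ) : ℕ := if 0 ≤ x then n.choose x.toNat else 0

/-- Circular Pascal array of order `d` with initial offset `y0`:
`σ_{n,k} = Σ_{i=0}^{y0} Σ_{j∈ℤ} C(n, k − i + d·j)`. -/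
noncomputable def circPascal (d y0 n : ℕ) (k : ℤ) : ℕ :=
  ∑ i ∈ Finset.range (y0 + 1), ∑ᶠ j : ℤ, binomZ n (k - i + d * j)

/-- Infinite-corridor number: the number of ±1 sequences of length `n` all of whose
partial sums, shifted by `y0`, stay nonnegative. -/
noncomputable def corridorCountInf (n y0 : ℕ) : ℕ :=
  Nat.card {r : Fin n → ℤ // (∀ i, r i = 1 ∨ r i = -1) ∧
    ∀ j : Fin n, 0 ≤ (y0 : ℤ) + ∑ i ∈ Finset.Iic j, r i}

/-! ### binomZ lemmas -/

lemma binomZ_of_neg {n : ℕ} {x : ℤ} (h : x < 0) : binomZ n x = 0 := by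
  simp [binomZ, not_le.mpr h]

lemma binomZ_of_gt {n : ℕ} {x : ℤ} (h : (n : ℤ) < x) : binomZ n x = 0 := by
  have hx : (0:ℤ) ≤ x := le_of_lt (lt_of_le_of_lt (Int.ofNat_nonneg n) h)
  have : n < x.toNat := by omega
  simp [binomZ, hx, Nat.choose_eq_zero_of_lt this]

lemma binomZ_pascal (n : ℕ) (x : ℤ) :
    binomZ (n + 1) x = binomZ n x + binomZ n (x - 1) := by
  rcases lt_trichotomy x 0 with h | h | h
  · rw [binomZ_of_neg h, binomZ_of_neg h, binomZ_of_neg (by omega)]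
  · subst h
    simp [binomZ, binomZ_of_neg (show (0:ℤ) - 1 < 0 by norm_num)]
  · have hx : (0:ℤ) ≤ x := le_of_lt h
    have hx1 : (0:ℤ) ≤ x - 1 := by omega
    have hm : x.toNat = (x - 1).toNat + 1 := by omega
    simp only [binomZ, if_pos hx, if_pos hx1]
    rw [hm, Nat.choose_succ_succ' n (x-1).toNat]
    omega

/-! ### The explicit binomial sum `S` -/

/-- `S n y0 = Σ_{i=0}^{y0} C(n, ⌊(n+y0)/2⌋ - i)`. -/
noncomputable def S (n y0 : ℕ) : ℕ :=
  ∑ i ∈ Finset.range (y0 + 1), binomZ n ((((n + y0) / 2 : ℕ) : ℤ) - i)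

lemma S_zero (y0 : ℕ) : S 0 y0 = 1 := by
  classical
  unfold S
  have h : ∀ i ∈ Finset.range (y0 + 1),
      binomZ 0 ((((0 + y0) / 2 : ℕ) : ℤ) - i) = if i = y0 / 2 then 1 else 0 := by
    intro i hi
    by_cases hiy : i = y0 / 2
    · subst hiy; simp [binomZ]
    · rw [if_neg hiy]
      have : (((0 + y0) / 2 : ℕ) : ℤ) - i ≠ 0 := by
        simp only [Nat.zero_add]
        intro hc
        apply hiy
        omega
      rcases lt_or_gt_of_ne this with h' | h'
      · exact binomZ_of_neg h'
      · exact binomZ_of_gt (by exact_mod_cast h')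

  rw [Finset.sum_congr rfl h, Finset.sum_ite_eq' (Finset.range (y0+1)) (y0/2) (fun _ => 1)]
  simp [Nat.lt_succ_iff, Nat.div_le_self]

lemma S_succ_zero (n : ℕ) : S (n + 1) 0 = S n 1 := by
  unfold S
  have hK : (n + 1 + 0) / 2 = (n + 1) / 2 := by omega
  rw [hK]
  rw [Finset.sum_range_succ, Finset.sum_range_succ, Finset.sum_range_zero, Finset.sum_range_one]
  rw [binomZ_pascal]
  push_cast
  ring_nf

lemma S_succ_succ (n y0 : ℕ) : S (n + 1) (y0 + 1) = S n (y0 + 2) + S n y0 := by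
  unfold S
  have hK : ((n + 1 + (y0 + 1)) / 2 : ℕ) = (n + y0) / 2 + 1 := by omega
  have hK2 : ((n + (y0 + 2)) / 2 : ℕ) = (n + y0) / 2 + 1 := by omega
  rw [hK, hK2]
  set k : ℕ := (n + y0) / 2 with hk
  have hpas : ∀ i ∈ Finset.range (y0 + 2),
      binomZ (n+1) (((k + 1 : ℕ) : ℤ) - i)
        = binomZ n (((k + 1 : ℕ) : ℤ) - i) + binomZ n ((k : ℤ) - i) := by
    intro i _
    rw [binomZ_pascal]
    congr 2
    push_cast; ring
  rw [Finset.sum_congr rfl hpas, Finset.sum_add_distrib]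
  have h1 : ∑ i ∈ Finset.range (y0 + 2 + 1), binomZ n (((k + 1 : ℕ) : ℤ) - i)
      = ∑ i ∈ Finset.range (y0 + 2), binomZ n (((k + 1 : ℕ) : ℤ) - i)
        + binomZ n ((k : ℤ) - (y0 + 1)) := by
    rw [Finset.sum_range_succ]
    congr 1
    congr 1
    push_cast; ring
  have h2 : ∑ i ∈ Finset.range (y0 + 2), binomZ n ((k : ℤ) - i)
      = ∑ i ∈ Finset.range (y0 + 1), binomZ n ((k : ℤ) - i)
        + binomZ n ((k : ℤ) - (y0 + 1)) := by
    rw [Finset.sum_range_succ]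
    push_cast; ring_nf
  rw [h1, h2]
  omega

/-! ### Corridor counts -/

/-- The corridor predicate. -/
def OKcor (n y0 : ℕ) (r : Fin n → ℤ) : Prop :=
  (∀ i, r i = 1 ∨ r i = -1) ∧ ∀ j : Fin n, 0 ≤ (y0 : ℤ) + ∑ i ∈ Finset.Iic j, r i

lemma corridorCountInf_def (n y0 : ℕ) :
    corridorCountInf n y0 = Nat.card {r : Fin n → ℤ // OKcor n y0 r} := rfl

instance okcor_finite (n y0 : ℕ) : Finite {r : Fin n → ℤ // OKcor n y0 r} := by
  classical
  apply Finite.of_injective (fun r : {r : Fin n → ℤ // OKcor n y0 r} =>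
    (fun i => decide (r.1 i = 1) : Fin n → Bool))
  intro a b h
  apply Subtype.ext
  funext i
  have hi := congrFun h i
  simp only [decide_eq_decide] at hi
  rcases a.2.1 i with ha | ha <;> rcases b.2.1 i with hb | hb <;>
    simp [ha, hb] at hi ⊢

lemma Iic_succ_fin (n : ℕ) (j : Fin n) :
    Finset.Iic (j.succ) = insert 0 ((Finset.Iic j).map (Fin.succEmb n)) := by
  ext i
  simp only [Finset.mem_Iic, Finset.mem_insert, Finset.mem_map, Fin.succEmb,
    Function.Embedding.coeFn_mk]
  constructor
  · intro h
    rcases Fin.eq_zero_or_eq_succ i with h0 | ⟨i', rfl⟩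
    · exact Or.inl h0
    · exact Or.inr ⟨i', Fin.succ_le_succ_iff.mp h, rfl⟩
  · rintro (rfl | ⟨i', hi, rfl⟩)
    · exact Fin.zero_le _
    · exact Fin.succ_le_succ_iff.mpr hi

lemma sum_Iic_succ (n : ℕ) (r : Fin (n + 1) → ℤ) (j : Fin n) :
    ∑ i ∈ Finset.Iic j.succ, r i = r 0 + ∑ i ∈ Finset.Iic j, r i.succ := by
  rw [Iic_succ_fin, Finset.sum_insert, Finset.sum_map]
  · rfl
  · simp only [Finset.mem_map, Fin.succEmb, Function.Embedding.coeFn_mk]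
    rintro ⟨i', _, hi⟩
    exact (Fin.succ_ne_zero i') hi

lemma Iic_zero_fin (n : ℕ) : Finset.Iic (0 : Fin (n + 1)) = {0} := by
  ext i; simp [Fin.le_zero_iff]

lemma cond_succ_iff (n : ℕ) (c : ℤ) (r : Fin (n + 1) → ℤ) :
    (∀ j : Fin (n + 1), 0 ≤ c + ∑ i ∈ Finset.Iic j, r i) ↔
      (0 ≤ c + r 0) ∧ ∀ j : Fin n, 0 ≤ (c + r 0) + ∑ i ∈ Finset.Iic j, r i.succ := by
  constructor
  · intro h
    refine ⟨?_, ?_⟩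
    · have := h 0
      rwa [Iic_zero_fin, Finset.sum_singleton] at this
    · intro j
      have := h j.succ
      rwa [sum_Iic_succ, ← add_assoc] at this
  · rintro ⟨h0, hs⟩ j
    rcases Fin.eq_zero_or_eq_succ j with rfl | ⟨j', rfl⟩
    · rwa [Iic_zero_fin, Finset.sum_singleton]
    · rw [sum_Iic_succ, ← add_assoc]
      exact hs j'

/-- The splitting equivalence for offset `y0 + 1`. -/
noncomputable def corridorEquivSucc (n y0 : ℕ) :
    {r : Fin (n + 1) → ℤ // OKcor (n + 1) (y0 + 1) r} ≃
      ({r : Fin n → ℤ // OKcor n (y0 + 2) r} ⊕ {r : Fin n → ℤ // OKcor n y0 r}) where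
  toFun r :=
    if h : r.1 0 = 1 then
      Sum.inl ⟨fun i => r.1 i.succ, by
        obtain ⟨hv, hc⟩ := r.2
        rw [cond_succ_iff] at hc
        refine ⟨fun i => hv i.succ, fun j => ?_⟩
        have := hc.2 j
        rw [h] at this
        push_cast at this ⊢
        linarith⟩
    else
      Sum.inr ⟨fun i => r.1 i.succ, by
        obtain ⟨hv, hc⟩ := r.2
        have h0 : r.1 0 = -1 := (hv 0).resolve_left h
        rw [cond_succ_iff] at hc
        refine ⟨fun i => hv i.succ, fun j => ?_⟩
        have := hc.2 j
        rw [h0] at this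
        push_cast at this ⊢
        linarith⟩
  invFun x :=
    match x with
    | Sum.inl s => ⟨Fin.cons 1 s.1, by
        obtain ⟨hv, hc⟩ := s.2
        constructor
        · intro i
          rcases Fin.eq_zero_or_eq_succ i with rfl | ⟨i', rfl⟩
          · left; simp
          · simpa using hv i'
        · rw [cond_succ_iff]
          constructor
          · simp only [Fin.cons_zero]
            positivity
          · intro j
            have := hc j
            simp only [Fin.cons_zero, Fin.cons_succ]
            push_cast at this ⊢
            linarith⟩
    | Sum.inr s => ⟨Fin.cons (-1) s.1, by
        obtain ⟨hv, hc⟩ := s.2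
        constructor
        · intro i
          rcases Fin.eq_zero_or_eq_succ i with rfl | ⟨i', rfl⟩
          · right; simp
          · simpa using hv i'
        · rw [cond_succ_iff]
          constructor
          · simp
          · intro j
            have := hc j
            simp only [Fin.cons_zero, Fin.cons_succ]
            push_cast at this ⊢
            linarith⟩
  left_inv := by
    rintro ⟨r, hr⟩
    by_cases h : r 0 = 1
    · simp only [dif_pos h]
      apply Subtype.ext
      funext i
      rcases Fin.eq_zero_or_eq_succ i with rfl | ⟨i', rfl⟩
      · simp [h]
      · simp
    · have h0 : r 0 = -1 := (hr.1 0).resolve_left h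
      simp only [dif_neg h]
      apply Subtype.ext
      funext i
      rcases Fin.eq_zero_or_eq_succ i with rfl | ⟨i', rfl⟩
      · simp [h0]
      · simp
  right_inv := by
    rintro (⟨s, hs⟩ | ⟨s, hs⟩)
    · have hcond : (Fin.cons 1 s : Fin (n+1) → ℤ) 0 = 1 := by simp
      simp only [dif_pos hcond]
      refine congrArg Sum.inl (Subtype.ext ?_)
      funext i
      simp
    · have hcond : ¬ ((Fin.cons (-1) s : Fin (n+1) → ℤ) 0 = 1) := by simp
      simp only [dif_neg hcond]
      refine congrArg Sum.inr (Subtype.ext ?_)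
      funext i
      simp

/-- The splitting equivalence for offset `0`: the first step must be `+1`. -/
noncomputable def corridorEquivZero (n : ℕ) :
    {r : Fin (n + 1) → ℤ // OKcor (n + 1) 0 r} ≃ {r : Fin n → ℤ // OKcor n 1 r} where
  toFun r := ⟨fun i => r.1 i.succ, by
    obtain ⟨hv, hc⟩ := r.2
    rw [cond_succ_iff] at hc
    have h0 : r.1 0 = 1 := by
      rcases hv 0 with h | h
      · exact h
      · exfalso; have := hc.1; rw [h] at this; norm_num at this
    refine ⟨fun i => hv i.succ, fun j => ?_⟩
    have := hc.2 j
    rw [h0] at this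
    push_cast at this ⊢
    linarith⟩
  invFun s := ⟨Fin.cons 1 s.1, by
    obtain ⟨hv, hc⟩ := s.2
    constructor
    · intro i
      rcases Fin.eq_zero_or_eq_succ i with rfl | ⟨i', rfl⟩
      · left; simp
      · simpa using hv i'
    · rw [cond_succ_iff]
      constructor
      · simp
      · intro j
        have := hc j
        simp only [Fin.cons_zero, Fin.cons_succ]
        push_cast at this ⊢
        linarith⟩
  left_inv := by
    rintro ⟨r, hr⟩
    have h0 : r 0 = 1 := by
      rcases hr.1 0 with h | h
      · exact h
      · exfalso
        have := hr.2 0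
        rw [Iic_zero_fin, Finset.sum_singleton, h] at this
        norm_num at this
    apply Subtype.ext
    funext i
    rcases Fin.eq_zero_or_eq_succ i with rfl | ⟨i', rfl⟩
    · simp [h0]
    · simp
  right_inv := by
    rintro ⟨s, hs⟩
    apply Subtype.ext
    funext i
    simp

lemma corridor_base (y0 : ℕ) : corridorCountInf 0 y0 = 1 := by
  rw [corridorCountInf_def]
  haveI : Nonempty {r : Fin 0 → ℤ // OKcor 0 y0 r} :=
    ⟨⟨fun i => i.elim0, fun i => i.elim0, fun j => j.elim0⟩⟩
  haveI : Subsingleton {r : Fin 0 → ℤ // OKcor 0 y0 r} := by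
    constructor
    rintro ⟨a, _⟩ ⟨b, _⟩
    apply Subtype.ext
    funext i
    exact i.elim0
  exact Nat.card_unique

lemma corridor_rec_succ (n y0 : ℕ) :
    corridorCountInf (n + 1) (y0 + 1) = corridorCountInf n (y0 + 2) + corridorCountInf n y0 := by
  rw [corridorCountInf_def, corridorCountInf_def, corridorCountInf_def,
    Nat.card_congr (corridorEquivSucc n y0), Nat.card_sum]

lemma corridor_rec_zero (n : ℕ) :
    corridorCountInf (n + 1) 0 = corridorCountInf n 1 := by
  rw [corridorCountInf_def, corridorCountInf_def, Nat.card_congr (corridorEquivZero n)]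

lemma corridor_eq_S (n y0 : ℕ) : corridorCountInf n y0 = S n y0 := by
  induction n generalizing y0 with
  | zero => rw [corridor_base, S_zero]
  | succ n ih =>
    cases y0 with
    | zero => rw [corridor_rec_zero, S_succ_zero, ih]
    | succ y0 => rw [corridor_rec_succ, S_succ_succ, ih, ih]

/-! ### Collapsing the circular Pascal array -/

lemma circPascal_eq_S (n y0 : ℕ) :
    circPascal (n + y0 + 2) y0 n (((n + y0) / 2 : ℕ) : ℤ) = S n y0 := by
  unfold circPascal S
  apply Finset.sum_congr rfl
  intro i hi
  rw [Finset.mem_range] at hi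
  set k : ℕ := (n + y0) / 2 with hk
  have hkle : k ≤ n + y0 := Nat.div_le_self _ _
  have hcollapse : ∀ j : ℤ, j ≠ 0 → binomZ n ((k : ℤ) - i + (n + y0 + 2 : ℕ) * j) = 0 := by
    intro j hj
    rcases lt_or_gt_of_ne hj with hneg | hpos
    · apply binomZ_of_neg
      have hd : ((n + y0 + 2 : ℕ) : ℤ) * j ≤ -((n + y0 + 2 : ℕ) : ℤ) := by
        have : (1:ℤ) ≤ -j := by omega
        nlinarith [Int.ofNat_nonneg (n + y0 + 2)]
      have hik : (k:ℤ) ≤ (n:ℤ) + y0 := by exact_mod_cast hkle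
      push_cast at hd ⊢
      omega
    · apply binomZ_of_gt
      have hd : ((n + y0 + 2 : ℕ) : ℤ) ≤ ((n + y0 + 2 : ℕ) : ℤ) * j := by
        have h1 : (1:ℤ) ≤ j := hpos
        nlinarith [Int.ofNat_nonneg (n + y0 + 2)]
      have hiy : (i : ℤ) ≤ (y0 : ℤ) := by exact_mod_cast Nat.lt_succ_iff.mp hi
      have hk0 : (0:ℤ) ≤ (k:ℤ) := Int.ofNat_nonneg k
      push_cast at hd ⊢
      omega
  rw [finsum_eq_single _ 0 hcollapse]
  norm_num

/-- With `d = n + y₀ + 2`, the infinite-corridor number satisfies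
`c^{(∞)}_{n,y₀} = σ_{n,⌊(n+y₀)/2⌋}` in the circular Pascal array of order `d`
with initial offset `y₀`. -/
theorem corridorInf_eq_circPascal (n y0 : ℕ) :
    corridorCountInf n y0 = circPascal (n + y0 + 2) y0 n (((n + y0) / 2 : ℕ) : ℤ) := by
  rw [circPascal_eq_S, corridor_eq_S]
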